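/- (Infimum form of the fixed-C optimality theorem, MISO case.) Fix A ∈ ℝ^{n×n} and data u : {1, …, N} → ℝ^m, y : {1, …, N} → ℝ. Let C₀ ∈ ℝ^{1×n} be any row vector such that (A, C₀) is observable. Then the infimum of V(y, u, A, B, C₀, D) over all B ∈ ℝ^{n×m} and D ∈ ℝ^{1×m} equals the infimum of V(y, u, A, B, C, D) over all B ∈ ℝ^{n×m}, C ∈ ℝ^{1×n}, and D ∈ ℝ^{1×m}. -/

import Mathlib

/-!
Every row vector `C` is a linear combination `∑ cᵢ C₀ Aⁱ` of the observability rows. Since powers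
of `A` commute, `C Aᵉ B = C₀ Aᵉ B'` for all `e` with `B' = ∑ cᵢ Aⁱ B`, and the cost depends on
`(B, C)` only through these Markov parameters `C Aᵉ B`. So every value of the cost over `(B, C, D)`
is already attained with `C = C₀`, and the two sets whose infima are compared coincide.
-/

open Matrix

/-- The output-error cost
`V(y, u, A, B, C, D) = ∑_{t=1}^N ‖y(t) − D u(t) − C ∑_{k=1}^t A^{t−k} B u(k)‖²`,
where `‖·‖` is the Euclidean norm on `ℝ^p` (realized via `EuclideanSpace`). -/
noncomputable def outputErrorCost {N n m p : ℕ}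
    (y : Fin N → Fin p → ℝ) (u : Fin N → Fin m → ℝ)
    (A : Matrix (Fin n) (Fin n) ℝ) (B : Matrix (Fin n) (Fin m) ℝ)
    (C : Matrix (Fin p) (Fin n) ℝ) (D : Matrix (Fin p) (Fin m) ℝ) : ℝ :=
  ∑ t : Fin N,
    ‖(WithLp.equiv 2 (Fin p → ℝ)).symm
        (y t - D *ᵥ u t - C *ᵥ ∑ k ∈ Finset.Iic t, A ^ ((t : ℕ) - (k : ℕ)) *ᵥ (B *ᵥ u k))‖ ^ 2

section MarkovParameters

variable {R : Type*} [CommRing R] {n m p : Type*} [Fintype n] [DecidableEq n]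

theorem exists_mul_pow_mul_eq_of_mem_span {C₀ C : Matrix p n R} {A : Matrix n n R}
    (B : Matrix n m R) (hC : C ∈ Submodule.span R (Set.range fun i : ℕ => C₀ * A ^ i)) :
    ∃ B' : Matrix n m R, ∀ e : ℕ, C₀ * A ^ e * B' = C * A ^ e * B := by
  induction hC using Submodule.span_induction with
  | mem _ hx =>
    obtain ⟨i, rfl⟩ := hx
    refine ⟨A ^ i * B, fun e => ?_⟩
    simp only [← Matrix.mul_assoc]
    rw [Matrix.mul_assoc C₀, (Commute.pow_pow_self A e i).eq, ← Matrix.mul_assoc]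
  | zero => exact ⟨0, fun e => by simp⟩
  | add _ _ _ _ h₁ h₂ =>
    obtain ⟨B₁, hB₁⟩ := h₁
    obtain ⟨B₂, hB₂⟩ := h₂
    exact ⟨B₁ + B₂, fun e => by rw [Matrix.mul_add, hB₁, hB₂, Matrix.add_mul, Matrix.add_mul]⟩
  | smul r _ _ h =>
    obtain ⟨B', hB'⟩ := h
    exact ⟨r • B', fun e => by rw [Matrix.mul_smul, hB', Matrix.smul_mul, Matrix.smul_mul]⟩

theorem mulVec_sum_pow_mulVec {ι : Type*} [Fintype m] (C : Matrix p n R) (A : Matrix n n R)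
    (B : Matrix n m R) (s : Finset ι) (f : ι → ℕ) (u : ι → m → R) :
    C *ᵥ ∑ k ∈ s, A ^ f k *ᵥ (B *ᵥ u k) = ∑ k ∈ s, (C * A ^ f k * B) *ᵥ u k := by
  simp only [mulVec_sum, mulVec_mulVec, Matrix.mul_assoc]

end MarkovParameters

theorem outputErrorCost_congr {N n m p : ℕ} (y : Fin N → Fin p → ℝ) (u : Fin N → Fin m → ℝ)
    (A : Matrix (Fin n) (Fin n) ℝ) {B B' : Matrix (Fin n) (Fin m) ℝ}
    {C C' : Matrix (Fin p) (Fin n) ℝ} (D : Matrix (Fin p) (Fin m) ℝ)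
    (h : ∀ e : ℕ, C * A ^ e * B = C' * A ^ e * B') :
    outputErrorCost y u A B C D = outputErrorCost y u A B' C' D := by
  simp only [outputErrorCost, mulVec_sum_pow_mulVec, h]

theorem span_mul_pow_eq_top_of_linearIndependent {K : Type*} [Field K] {n : ℕ}
    {C₀ : Matrix (Fin 1) (Fin n) K} {A : Matrix (Fin n) (Fin n) K}
    (hobs : LinearIndependent K fun i : Fin n => C₀ * A ^ (i : ℕ)) :
    Submodule.span K (Set.range fun i : ℕ => C₀ * A ^ i) = ⊤ := by
  refine eq_top_mono (Submodule.span_mono ?_)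
    (hobs.span_eq_top_of_card_eq_finrank' (by simp [Module.finrank_matrix]))
  exact Set.range_comp_subset_range Fin.val fun i : ℕ => C₀ * A ^ i

/-- **infimum form of the fixed-`C` optimality theorem, MISO case.**
For any row vector `C₀` with `(A, C₀)` observable, the infimum of the output-error
cost over `(B, D)` with `C₀` fixed equals the infimum over all `(B, C, D)`. -/
theorem fixed_C_optimality_miso_inf {N n m : ℕ}
    (y : Fin N → Fin 1 → ℝ) (u : Fin N → Fin m → ℝ)
    (A : Matrix (Fin n) (Fin n) ℝ)
    (C₀ : Matrix (Fin 1) (Fin n) ℝ)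
    (hobs : LinearIndependent ℝ (fun i : Fin n => C₀ * A ^ (i : ℕ))) :
    sInf {v : ℝ | ∃ (B : Matrix (Fin n) (Fin m) ℝ) (D : Matrix (Fin 1) (Fin m) ℝ),
        v = outputErrorCost y u A B C₀ D} =
      sInf {v : ℝ | ∃ (B : Matrix (Fin n) (Fin m) ℝ) (C : Matrix (Fin 1) (Fin n) ℝ)
        (D : Matrix (Fin 1) (Fin m) ℝ), v = outputErrorCost y u A B C D} := by
  congr 1
  ext v
  constructor
  · rintro ⟨B, D, rfl⟩
    exact ⟨B, C₀, D, rfl⟩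
  · rintro ⟨B, C, D, rfl⟩
    have hC : C ∈ Submodule.span ℝ (Set.range fun i : ℕ => C₀ * A ^ i) := by
      rw [span_mul_pow_eq_top_of_linearIndependent hobs]
      exact Submodule.mem_top
    obtain ⟨B', hB'⟩ := exists_mul_pow_mul_eq_of_mem_span B hC
    exact ⟨B', D, outputErrorCost_congr y u A D fun e => (hB' e).symm⟩
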